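/- arXiv:1703.08816 — 2 statements merged into one kernel-verified Lean document; each statement's English description precedes it below -/
import Mathlib

section
/- For all real x, the standard normal cdf Ψ(x) = (1/√(2π)) ∫_{-∞}^x e^{-t²/2} dt satisfies Ψ''(x)·Ψ(x) − (Ψ'(x))² < 0. -/
/-!
Write `φ t = exp (-t²/2)` and `c = (2π)^{-1/2}`, so that `Ψ' = c φ` and `Ψ'' = -x c φ`. Then
`Ψ'' Ψ - Ψ'² = -c² φ(x) (x ∫_{t ≤ x} φ + φ(x))`, and since `∫_{t ≤ x} t φ(t) dt = -φ(x)` the last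
factor is `∫_{t ≤ x} (x - t) φ(t) dt`, the integral of a function positive on `(-∞, x)`.
-/

open Real MeasureTheory Set Filter

theorem hasDerivAt_integral_Iic {E : Type*} [NormedAddCommGroup E] [NormedSpace ℝ E]
    [CompleteSpace E] {f : ℝ → E} (hf : Continuous f) (hfi : Integrable f) (x : ℝ) :
    HasDerivAt (fun u => ∫ t in Iic u, f t) (f x) x := by
  have h := intervalIntegral.integral_hasDerivAt_right (hfi.intervalIntegrable (a := 0) (b := x))
    hf.aestronglyMeasurable.stronglyMeasurableAtFilter hf.continuousAt
  refine (h.const_add (∫ t in Iic 0, f t)).congr_of_eventuallyEq (Eventually.of_forall fun u => ?_)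
  dsimp only
  rw [← intervalIntegral.integral_Iic_sub_Iic hfi.integrableOn hfi.integrableOn, add_sub_cancel]

theorem hasDerivAt_exp_neg_sq_div_two (x : ℝ) :
    HasDerivAt (fun t => exp (-t ^ 2 / 2)) (-x * exp (-x ^ 2 / 2)) x := by
  have h : HasDerivAt (fun t : ℝ => -t ^ 2 / 2) (-(2 * x) / 2) x := by
    simpa using ((hasDerivAt_pow 2 x).fun_neg).div_const 2
  exact h.exp.congr_deriv (by ring)

theorem integrable_exp_neg_sq_div_two : Integrable fun t : ℝ => exp (-t ^ 2 / 2) := by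
  convert integrable_exp_neg_mul_sq (b := 1 / 2) (by norm_num) using 3
  ring

theorem integrable_mul_exp_neg_sq_div_two : Integrable fun t : ℝ => t * exp (-t ^ 2 / 2) := by
  convert integrable_mul_exp_neg_mul_sq (b := 1 / 2) (by norm_num) using 4
  ring

theorem integral_Iic_mul_exp_neg_sq_div_two (x : ℝ) :
    ∫ t in Iic x, t * exp (-t ^ 2 / 2) = -exp (-x ^ 2 / 2) := by
  have hderiv (t : ℝ) : HasDerivAt (fun t => -exp (-t ^ 2 / 2)) (t * exp (-t ^ 2 / 2)) t := by
    simpa using (hasDerivAt_exp_neg_sq_div_two t).fun_neg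
  have hlim : Tendsto (fun t => -exp (-t ^ 2 / 2)) atBot (nhds 0) :=
    tendsto_zero_of_hasDerivAt_of_integrableOn_Iic (a := 0) (fun t _ => hderiv t)
      integrable_mul_exp_neg_sq_div_two.integrableOn integrable_exp_neg_sq_div_two.neg.integrableOn
  simpa using integral_Iic_of_hasDerivAt_of_tendsto' (fun t _ => hderiv t)
    integrable_mul_exp_neg_sq_div_two.integrableOn hlim

theorem mul_integral_Iic_exp_neg_sq_div_two_add_pos (x : ℝ) :
    0 < x * (∫ t in Iic x, exp (-t ^ 2 / 2)) + exp (-x ^ 2 / 2) := by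
  have hint : Integrable fun t : ℝ => (x - t) * exp (-t ^ 2 / 2) := by
    simpa only [Pi.sub_def, sub_mul] using
      (integrable_exp_neg_sq_div_two.const_mul x).sub integrable_mul_exp_neg_sq_div_two
  have hsplit : ∫ t in Iic x, (x - t) * exp (-t ^ 2 / 2)
      = x * (∫ t in Iic x, exp (-t ^ 2 / 2)) + exp (-x ^ 2 / 2) := by
    simp only [sub_mul]
    rw [integral_sub (integrable_exp_neg_sq_div_two.const_mul x).integrableOn
      integrable_mul_exp_neg_sq_div_two.integrableOn, integral_const_mul,
      integral_Iic_mul_exp_neg_sq_div_two, sub_neg_eq_add]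
  rw [← hsplit, setIntegral_pos_iff_support_of_nonneg_ae _ hint.integrableOn]
  · have hsupport : Iio x ⊆ Function.support (fun t => (x - t) * exp (-t ^ 2 / 2)) ∩ Iic x :=
      fun t ht => ⟨(mul_pos (sub_pos.2 ht) (exp_pos _)).ne', mem_Iic.2 ht.le⟩
    refine lt_of_lt_of_le ?_ (measure_mono hsupport)
    simp
  · filter_upwards [ae_restrict_mem measurableSet_Iic] with t ht
    exact mul_nonneg (sub_nonneg.2 ht) (exp_pos _).le

theorem stmt_0 (Ψ : ℝ → ℝ)
    (hΨ : ∀ x, Ψ x = (Real.sqrt (2 * Real.pi))⁻¹ * ∫ t in Set.Iic x, Real.exp (-t ^ 2 / 2)) :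
    ∀ x : ℝ, deriv (deriv Ψ) x * Ψ x - (deriv Ψ x) ^ 2 < 0 := by
  intro x
  set c := (Real.sqrt (2 * Real.pi))⁻¹
  have hΨ' : deriv Ψ = fun u => c * exp (-u ^ 2 / 2) := funext fun u =>
    (((hasDerivAt_integral_Iic (by fun_prop) integrable_exp_neg_sq_div_two u).const_mul c
      ).congr_of_eventuallyEq (Eventually.of_forall hΨ)).deriv
  have hΨ'' : deriv (deriv Ψ) x = c * (-x * exp (-x ^ 2 / 2)) := by
    rw [hΨ']
    exact ((hasDerivAt_exp_neg_sq_div_two x).const_mul c).deriv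
  rw [hΨ'', hΨ', hΨ x]
  set I := ∫ t in Iic x, exp (-t ^ 2 / 2)
  set φx := exp (-x ^ 2 / 2)
  calc c * (-x * φx) * (c * I) - (c * φx) ^ 2 = -(c ^ 2 * φx * (x * I + φx)) := by ring
    _ < 0 := neg_neg_of_pos <|
      mul_pos (by positivity) (mul_integral_Iic_exp_neg_sq_div_two_add_pos x)
end

section
/- The function x ↦ log Ψ(x), where Ψ is the standard normal cdf, is strictly concave on ℝ. -/
/-! Write `F(x) = ∫_{-∞}^x φ` with `φ(t) = exp(-t²/2)`, so that `log Ψ = log F - log √(2π)`.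
Since `F' = φ` and `φ' = -x φ`, we get `(log F)'' = -φ (x F + φ) / F²`, and
`x F(x) + φ(x) = ∫_{-∞}^x (x - t) φ(t) dt > 0` because `∫_{-∞}^x (-t) φ(t) dt = φ(x)`. -/

open Real MeasureTheory Set Filter Topology

theorem setIntegral_pos_of_isOpen {X : Type*} [TopologicalSpace X] [MeasurableSpace X]
    [OpensMeasurableSpace X] {μ : Measure X} [μ.IsOpenPosMeasure] {s : Set X} {f : X → ℝ}
    (hs : IsOpen s) (hne : s.Nonempty) (hfi : IntegrableOn f s μ) (hpos : ∀ x ∈ s, 0 < f x) :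
    0 < ∫ x in s, f x ∂μ := by
  rw [setIntegral_pos_iff_support_of_nonneg_ae
    ((ae_restrict_mem₀ hs.nullMeasurableSet).mono fun x hx => (hpos x hx).le) hfi,
    inter_eq_right.2 fun x hx => Function.mem_support.2 (hpos x hx).ne']
  exact hs.measure_pos μ hne

theorem setIntegral_Iic_pos {f : ℝ → ℝ} {x : ℝ} (hfi : IntegrableOn f (Iic x))
    (hpos : ∀ t < x, 0 < f t) : 0 < ∫ t in Iic x, f t := by
  rw [integral_Iic_eq_integral_Iio]
  exact setIntegral_pos_of_isOpen isOpen_Iio nonempty_Iio (hfi.mono_set Iio_subset_Iic_self) hpos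

theorem hasDerivAt_integral_Iic_s1 {f : ℝ → ℝ} {x : ℝ} (hfi : Integrable f)
    (hfc : ContinuousAt f x) : HasDerivAt (fun y => ∫ t in Iic y, f t) (f x) x := by
  have hsplit :
      (fun y => ∫ t in Iic y, f t) = fun y => (∫ t in Iic 0, f t) + ∫ t in 0..y, f t := by
    funext y
    rw [← intervalIntegral.integral_Iic_sub_Iic hfi.integrableOn hfi.integrableOn]
    ring
  rw [hsplit]
  exact (intervalIntegral.integral_hasDerivAt_right hfi.intervalIntegrable
    hfi.aestronglyMeasurable.stronglyMeasurableAtFilter hfc).const_add _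

theorem strictConcaveOn_log_of_hasDerivAt {F f f' : ℝ → ℝ} (hF : ∀ x, 0 < F x)
    (hFf : ∀ x, HasDerivAt F (f x) x) (hff' : ∀ x, HasDerivAt f (f' x) x)
    (hlt : ∀ x, f' x * F x < f x ^ 2) : StrictConcaveOn ℝ univ fun x => log (F x) := by
  have hlog : ∀ x, HasDerivAt (fun y => log (F y)) (f x / F x) x :=
    fun x => (hFf x).log (hF x).ne'
  have hderiv : deriv (fun y => log (F y)) = fun x => f x / F x :=
    funext fun x => (hlog x).deriv
  refine strictConcaveOn_of_deriv2_neg convex_univ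
    (fun x _ => (hlog x).continuousAt.continuousWithinAt) fun x _ => ?_
  rw [Function.iterate_succ_apply, Function.iterate_one, hderiv,
    ((hff' x).fun_div (hFf x) (hF x).ne').deriv]
  exact div_neg_of_neg_of_pos (by nlinarith [hlt x]) (pow_pos (hF x) 2)

noncomputable def gauss (t : ℝ) : ℝ := exp (-t ^ 2 / 2)

/-- Unnormalised: the standard Gaussian cdf is `gaussCDF / √(2π)`. -/
noncomputable def gaussCDF (x : ℝ) : ℝ := ∫ t in Iic x, gauss t

theorem gauss_pos (t : ℝ) : 0 < gauss t := exp_pos _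

theorem gauss_eq : gauss = fun t => exp (-(1 / 2) * t ^ 2) := by
  funext t; rw [gauss]; ring_nf

theorem integrable_gauss : Integrable gauss := by
  rw [gauss_eq]; exact integrable_exp_neg_mul_sq (by norm_num)

theorem integrable_mul_gauss : Integrable fun t => t * gauss t := by
  rw [gauss_eq]; exact integrable_mul_exp_neg_mul_sq (by norm_num)

theorem integrable_neg_mul_gauss : Integrable fun t => -t * gauss t := by
  simp_rw [neg_mul]; exact integrable_mul_gauss.neg

theorem hasDerivAt_gauss (t : ℝ) : HasDerivAt gauss (-t * gauss t) t := by
  refine ((hasDerivAt_pow 2 t).fun_neg.div_const 2).exp.congr_deriv ?_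
  rw [gauss]; push_cast; ring

theorem integral_Iic_neg_mul_gauss (x : ℝ) : ∫ t in Iic x, -t * gauss t = gauss x := by
  have hlim : Tendsto gauss atBot (𝓝 0) :=
    tendsto_zero_of_hasDerivAt_of_integrableOn_Iic (a := 0) (fun t _ => hasDerivAt_gauss t)
      integrable_neg_mul_gauss.integrableOn integrable_gauss.integrableOn
  rw [integral_Iic_of_hasDerivAt_of_tendsto' (fun t _ => hasDerivAt_gauss t)
    integrable_neg_mul_gauss.integrableOn hlim, sub_zero]

theorem gaussCDF_pos (x : ℝ) : 0 < gaussCDF x :=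
  setIntegral_Iic_pos integrable_gauss.integrableOn fun t _ => gauss_pos t

theorem hasDerivAt_gaussCDF (x : ℝ) : HasDerivAt gaussCDF (gauss x) x :=
  hasDerivAt_integral_Iic_s1 integrable_gauss (continuous_exp.comp (by fun_prop)).continuousAt

theorem mul_gaussCDF_add_gauss (x : ℝ) :
    x * gaussCDF x + gauss x = ∫ t in Iic x, (x - t) * gauss t := by
  have hint : IntegrableOn (fun t => x * gauss t) (Iic x) :=
    (integrable_gauss.const_mul x).integrableOn
  simp_rw [sub_mul, sub_eq_add_neg, ← neg_mul]
  rw [integral_add hint integrable_neg_mul_gauss.integrableOn, integral_const_mul,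
    integral_Iic_neg_mul_gauss, gaussCDF]

theorem mul_gaussCDF_add_gauss_pos (x : ℝ) : 0 < x * gaussCDF x + gauss x := by
  have hint : Integrable fun t => (x - t) * gauss t := by
    simp_rw [sub_mul]; exact (integrable_gauss.const_mul x).sub integrable_mul_gauss
  rw [mul_gaussCDF_add_gauss]
  exact setIntegral_Iic_pos hint.integrableOn fun t ht => mul_pos (sub_pos.2 ht) (gauss_pos t)

theorem strictConcaveOn_log_gaussCDF : StrictConcaveOn ℝ univ fun x => log (gaussCDF x) :=
  strictConcaveOn_log_of_hasDerivAt gaussCDF_pos hasDerivAt_gaussCDF hasDerivAt_gauss fun x => by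
    nlinarith [mul_pos (gauss_pos x) (mul_gaussCDF_add_gauss_pos x)]

theorem stmt_1 (Ψ : ℝ → ℝ)
    (hΨ : ∀ x, Ψ x = (Real.sqrt (2 * Real.pi))⁻¹ * ∫ t in Set.Iic x, Real.exp (-t ^ 2 / 2)) :
    StrictConcaveOn ℝ Set.univ (fun x => Real.log (Ψ x)) := by
  have hc : (Real.sqrt (2 * Real.pi))⁻¹ ≠ 0 := by positivity
  have hΨ' : ∀ x, Ψ x = (Real.sqrt (2 * Real.pi))⁻¹ * gaussCDF x := hΨ
  have hlog : (fun x => log (Ψ x)) =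
      (fun x => log (gaussCDF x)) + fun _ => log (Real.sqrt (2 * Real.pi))⁻¹ := by
    funext x
    rw [Pi.add_apply, hΨ', log_mul hc (gaussCDF_pos x).ne', add_comm]
  rw [hlog]
  exact strictConcaveOn_log_gaussCDF.add_const _
end
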